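/- arXiv:2306.10154 — 3 statements merged into one kernel-verified Lean document; each statement's English description precedes it below -/
import Mathlib

section
/- Let a=(a_1,…,a_m) and b=(b_1,…,b_t) be compositions of n such that the meander M(a|b) consists of a single path, so that g1 = p^A(a|b) and g2 = p^A(b|a) are Frobenius type-A seaweeds. Then the spectrum of g1 equals the spectrum of g2 as multisets, and the extended spectrum of g1 equals the extended spectrum of g2 as multisets. -/
namespace Seaweed

/-- Positions `i` and `j` (1-indexed) are joined by an arc of the composition `c`:
they lie in the same block of `c` and are placed symmetrically within it. -/
def blockPair (c : List ℕ) (i j : ℕ) : Prop :=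
  ∃ k, k < c.length ∧ (c.take k).sum < i ∧ (c.take k).sum < j ∧
    i + j = 2 * (c.take k).sum + c.getD k 0 + 1 ∧ i ≠ j

lemma blockPair_symm {c : List ℕ} {i j : ℕ} (h : blockPair c i j) : blockPair c j i := by
  obtain ⟨k, hk, hi, hj, hsum, hne⟩ := h
  exact ⟨k, hk, hj, hi, by omega, hne.symm⟩

/-- The meander `M(a|b)` of the pair of compositions `(a, b)`, as a simple graph on `ℕ`
(positions `1, …, a.sum` carry the meander; all other naturals are isolated).
Top edges come from `a`, bottom edges from `b`. -/
def meander (a b : List ℕ) : SimpleGraph ℕ where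
  Adj i j := blockPair a i j ∨ blockPair b i j
  symm := ⟨fun _ _ h => h.imp blockPair_symm blockPair_symm⟩
  loopless := ⟨by
    rintro i (⟨k, _, _, _, _, hne⟩ | ⟨k, _, _, _, _, hne⟩) <;> exact hne rfl⟩

/-- The directed-edge relation of the oriented meander: top edges are oriented
right-to-left, bottom edges left-to-right. -/
def dirEdge (a b : List ℕ) (x y : ℕ) : Prop :=
  (blockPair a x y ∧ y < x) ∨ (blockPair b x y ∧ x < y)

open scoped Classical in
/-- The weight of a walk in the oriented meander: each step taken in agreement with
the orientation counts `+1`, each step against it counts `-1`. -/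
noncomputable def walkWeight (a b : List ℕ) {i j : ℕ} (w : (meander a b).Walk i j) : ℤ :=
  (w.darts.map fun d => if dirEdge a b d.toProd.1 d.toProd.2 then (1 : ℤ) else -1).sum

open scoped Classical in
/-- `w(P_{i,j}(a|b))`: the weight of the (unique, when the meander consists of a single
path) path from `v_i` to `v_j` in the oriented meander. -/
noncomputable def pathWeight (a b : List ℕ) (i j : ℕ) : ℤ :=
  if h : ∃ p : (meander a b).Walk i j, p.IsPath then walkWeight a b h.choose else 0

/-- The meander of `(a, b)` consists of a single path: it has no cycles (in particular no
doubled top/bottom edge, which would be a 2-cycle) and all positions `1, …, n` are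
connected.  This is exactly the condition for `p^A(a|b)` to be Frobenius. -/
def IsSinglePath (a b : List ℕ) : Prop :=
  (meander a b).IsAcyclic ∧
  (∀ i j, i ∈ Finset.Icc 1 a.sum → j ∈ Finset.Icc 1 a.sum → (meander a b).Reachable i j) ∧
  ∀ i j, ¬(blockPair a i j ∧ blockPair b i j)

/-- `i` and `j` lie in the same block of the composition `c`. -/
def sameBlock (c : List ℕ) (i j : ℕ) : Prop :=
  ∃ k, k < c.length ∧ (c.take k).sum < i ∧ i ≤ (c.take k).sum + c.getD k 0 ∧
    (c.take k).sum < j ∧ j ≤ (c.take k).sum + c.getD k 0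

/-- The matrix position `(i, j)` belongs to the seaweed `p^A(a|b)`. -/
def seaweedPos (a b : List ℕ) (i j : ℕ) : Prop :=
  (j ≤ i ∧ sameBlock a i j) ∨ (i ≤ j ∧ sameBlock b i j)

open scoped Classical in
/-- The block of the spectrum matrix of `p^A(a|b)` on rows `R` and columns `C`:
the multiset of weights `w(P_{i,j})` over positions `(i,j)` of the seaweed with
`i ∈ R`, `j ∈ C`. -/
noncomputable def spectrumBlock (a b : List ℕ) (R C : Finset ℕ) : Multiset ℤ :=
  ((R ×ˢ C).filter fun p => seaweedPos a b p.1 p.2).val.map fun p => pathWeight a b p.1 p.2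

/-- The multiset of all values of the extended spectrum matrix of `p^A(a|b)`:
the weights `w(P_{i,j})` over all pairs `1 ≤ i, j ≤ n`. -/
noncomputable def extendedValues (a b : List ℕ) : Multiset ℤ :=
  (Finset.Icc 1 a.sum ×ˢ Finset.Icc 1 a.sum).val.map fun p => pathWeight a b p.1 p.2

/-- The spectrum of a Frobenius type-A seaweed `p^A(a|b)`: the multiset of entries of
its spectrum matrix, with one copy of `0` removed. -/
noncomputable def spectrum (a b : List ℕ) : Multiset ℤ :=
  spectrumBlock a b (Finset.Icc 1 a.sum) (Finset.Icc 1 a.sum) - {0}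

/-- The extended spectrum: all entries of the extended spectrum matrix, with one copy
of `0` removed. -/
noncomputable def extendedSpectrum (a b : List ℕ) : Multiset ℤ :=
  extendedValues a b - {0}

/-- Listing the distinct values of the multiset `S` in increasing order, the
corresponding sequence of multiplicities is log-concave. -/
def HasLogConcaveSpectrum (S : Multiset ℤ) : Prop :=
  ∀ i : ℕ, 0 < i → i + 1 < (S.toFinset.sort (· ≤ ·)).length →
    S.count ((S.toFinset.sort (· ≤ ·)).getD (i - 1) 0) *
      S.count ((S.toFinset.sort (· ≤ ·)).getD (i + 1) 0) ≤
      S.count ((S.toFinset.sort (· ≤ ·)).getD i 0) ^ 2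

end Seaweed

/-!
Exchanging `a` and `b` leaves the meander unchanged but swaps top and bottom edges, so every
edge is oriented the other way. So a walk from `v_i` to `v_j` in `M(b|a)` has the weight of
its reverse in `M(a|b)`, and as paths in an acyclic graph are unique,
`w(P_{i,j}(b|a)) = w(P_{j,i}(a|b))`: the spectrum matrix of `p^A(b|a)` is the transpose of
that of `p^A(a|b)`, and so is its set of positions.
-/

lemma Finset.val_map_product_swap {α β γ : Type*} (s : Finset α) (t : Finset β)
    (f : β × α → γ) : (s ×ˢ t).val.map (f ∘ Prod.swap) = (t ×ˢ s).val.map f := by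
  rw [← Finset.map_swap_product, Finset.map_val, Multiset.map_map]
  rfl

namespace Seaweed

open SimpleGraph

lemma meander_comm (a b : List ℕ) : meander b a = meander a b := by
  ext i j
  exact or_comm

lemma blockPair_comm {c : List ℕ} {i j : ℕ} : blockPair c i j ↔ blockPair c j i :=
  ⟨blockPair_symm, blockPair_symm⟩

lemma dirEdge_comm (a b : List ℕ) (x y : ℕ) : dirEdge b a x y ↔ dirEdge a b y x := by
  simp only [dirEdge, blockPair_comm (i := x)]
  exact or_comm

lemma walkWeight_mapLe_reverse (a b : List ℕ) {i j : ℕ} (p : (meander a b).Walk i j) :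
    walkWeight b a (p.reverse.mapLe (meander_comm b a).le) = walkWeight a b p := by
  classical
  simp only [walkWeight, Walk.mapLe, Walk.darts_map, Walk.darts_reverse, List.map_reverse,
    List.map_map, List.sum_reverse]
  congr 1
  refine List.map_congr_left fun d _ => ?_
  simp [dirEdge_comm]

lemma pathWeight_eq_walkWeight {a b : List ℕ} (hac : (meander a b).IsAcyclic) {i j : ℕ}
    (p : (meander a b).Walk i j) (hp : p.IsPath) : pathWeight a b i j = walkWeight a b p := by
  have hex : ∃ q : (meander a b).Walk i j, q.IsPath := ⟨p, hp⟩
  rw [pathWeight, dif_pos hex]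
  exact congrArg (walkWeight a b ∘ Subtype.val)
    ((hac.subsingleton_path i j).elim ⟨_, hex.choose_spec⟩ ⟨p, hp⟩)

lemma pathWeight_of_not_reachable {a b : List ℕ} {i j : ℕ}
    (h : ¬ (meander a b).Reachable i j) : pathWeight a b i j = 0 :=
  dif_neg fun ⟨p, _⟩ => h ⟨p⟩

lemma pathWeight_comm {a b : List ℕ} (hac : (meander a b).IsAcyclic) (i j : ℕ) :
    pathWeight b a i j = pathWeight a b j i := by
  by_cases hji : (meander a b).Reachable j i
  · let p := hji.some.toPath
    have hac' : (meander b a).IsAcyclic := meander_comm a b ▸ hac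
    rw [pathWeight_eq_walkWeight hac p.1 p.2, ← walkWeight_mapLe_reverse,
      pathWeight_eq_walkWeight hac' _ (p.2.reverse.mapLe _)]
  · have hij : ¬ (meander b a).Reachable i j := by
      rw [meander_comm]
      exact fun h => hji h.symm
    rw [pathWeight_of_not_reachable hji, pathWeight_of_not_reachable hij]

lemma sameBlock_comm {c : List ℕ} {i j : ℕ} : sameBlock c i j ↔ sameBlock c j i := by
  unfold sameBlock
  constructor <;> rintro ⟨k, hk, h₁, h₂, h₃, h₄⟩ <;> exact ⟨k, hk, h₃, h₄, h₁, h₂⟩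

lemma seaweedPos_comm (a b : List ℕ) (i j : ℕ) : seaweedPos b a i j ↔ seaweedPos a b j i := by
  simp only [seaweedPos, sameBlock_comm (i := i)]
  exact or_comm

lemma spectrumBlock_comm {a b : List ℕ} (hac : (meander a b).IsAcyclic) (R C : Finset ℕ) :
    spectrumBlock b a C R = spectrumBlock a b R C := by
  classical
  unfold spectrumBlock
  rw [← Finset.map_swap_product, Finset.filter_map, Finset.map_val, Multiset.map_map]
  congr 1
  · ext p
    exact pathWeight_comm hac p.2 p.1
  · congr 2
    ext p
    exact seaweedPos_comm a b p.2 p.1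

lemma extendedValues_comm {a b : List ℕ} (hac : (meander a b).IsAcyclic)
    (hsum : a.sum = b.sum) : extendedValues b a = extendedValues a b := by
  unfold extendedValues
  rw [hsum, ← Finset.val_map_product_swap]
  congr 1
  ext p
  exact pathWeight_comm hac p.2 p.1

theorem statement2_general (n : ℕ) (a b : List ℕ)
    (hsa : a.sum = n) (hsb : b.sum = n)
    (hpath : IsSinglePath a b) :
    spectrum a b = spectrum b a ∧ extendedSpectrum a b = extendedSpectrum b a := by
  have hac := hpath.1
  refine ⟨?_, ?_⟩
  · rw [spectrum, spectrum, hsa, hsb, spectrumBlock_comm hac]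
  · rw [extendedSpectrum, extendedSpectrum, extendedValues_comm hac (hsa.trans hsb.symm)]

/-- If the meander of the compositions `a`, `b` of `n` is a single path, then the
(extended) spectra of the Frobenius type-A seaweeds `p^A(a|b)` and `p^A(b|a)`
coincide as multisets. -/
theorem statement2 (n : ℕ) (a b : List ℕ)
    (ha : ∀ x ∈ a, 0 < x) (hb : ∀ x ∈ b, 0 < x)
    (hsa : a.sum = n) (hsb : b.sum = n)
    (hpath : IsSinglePath a b) :
    spectrum a b = spectrum b a ∧ extendedSpectrum a b = extendedSpectrum b a :=
  statement2_general n a b hsa hsb hpath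

end Seaweed
end

section
/- Let k1, k2, m be positive integers with gcd(k1,k2)=1, and let g1 = p^A(mk1+k2 | k1 / (m+1)k1+k2) and g2 = p^A((m−1)k1+k2 | k1 / mk1+k2), which are Frobenius type-A seaweeds. Then the block of the spectrum matrix of g1 on rows {1,…,mk1+k2} and columns {1,…,mk1+k2} is equal, as a multiset, to the multiset of values of the extended spectrum matrix of g2. -/
/-!
Orient the meander of the maximal parabolic seaweed `p^A(A|B / A+B)`. When `gcd(A, B) = 1` the
meander is connected and carries a potential `φ` raised by one along every oriented edge, so
`w(P_{i,j}) = φ(j) - φ(i)`. Both facts propagate along the subtractive Euclidean algorithm: the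
meander of `(A|B)` is the mirror image of that of `(B|A)`, and the reflection `x ↦ C + B + 1 - x`
carries `M(C|B)` into `M(C+B|B)`, so that `φ_{C+B,B}(i) = φ_{C,B}(C + B + 1 - i) - 1` for
`i ≤ C + B`.

For `C = (m-1)k1 + k2` and `B = k1`, the whole top-left `(C+B) × (C+B)` block lies in the first
top block of `g1`, and its entry at `(i, j)` is the entry of the extended spectrum matrix of `g2`
at `(C + B + 1 - i, C + B + 1 - j)`; the reflection permutes the positions.
-/

namespace Seaweed

lemma blockPair_two_iff (p q i j : ℕ) :
    blockPair [p, q] i j ↔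
      (0 < i ∧ 0 < j ∧ i + j = p + 1 ∧ i ≠ j) ∨
      (p < i ∧ p < j ∧ i + j = 2 * p + q + 1 ∧ i ≠ j) := by
  constructor
  · rintro ⟨k, hk, hi, hj, hs, hne⟩
    simp only [List.length_cons, List.length_nil] at hk
    interval_cases k <;> simp_all [List.take, List.getD]
  · rintro (⟨hi, hj, hs, hne⟩ | ⟨hi, hj, hs, hne⟩)
    · exact ⟨0, by simp, by simpa, by simpa, by simpa using hs, hne⟩
    · exact ⟨1, by simp, by simpa, by simpa, by simp; omega, hne⟩

lemma blockPair_one_iff (r i j : ℕ) :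
    blockPair [r] i j ↔ (0 < i ∧ 0 < j ∧ i + j = r + 1 ∧ i ≠ j) := by
  constructor
  · rintro ⟨k, hk, hi, hj, hs, hne⟩
    simp only [List.length_cons, List.length_nil] at hk
    interval_cases k
    simp_all [List.take, List.getD]
  · rintro ⟨hi, hj, hs, hne⟩
    exact ⟨0, by simp, by simpa, by simpa, by simpa using hs, hne⟩

lemma dirEdge_maximal_iff (A B x y : ℕ) :
    dirEdge [A, B] [A + B] x y ↔
      (0 < x ∧ 0 < y ∧ x + y = A + 1 ∧ y < x) ∨
      (A < x ∧ A < y ∧ x + y = 2 * A + B + 1 ∧ y < x) ∨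
      (0 < x ∧ 0 < y ∧ x + y = A + B + 1 ∧ x < y) := by
  rw [dirEdge, blockPair_two_iff, blockPair_one_iff]
  omega

lemma meander_adj_maximal_iff (A B x y : ℕ) :
    (meander [A, B] [A + B]).Adj x y ↔
      (0 < x ∧ 0 < y ∧ x + y = A + 1 ∧ x ≠ y) ∨
      (A < x ∧ A < y ∧ x + y = 2 * A + B + 1 ∧ x ≠ y) ∨
      (0 < x ∧ 0 < y ∧ x + y = A + B + 1 ∧ x ≠ y) := by
  change blockPair _ x y ∨ blockPair _ x y ↔ _
  rw [blockPair_two_iff, blockPair_one_iff]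
  omega

lemma dirEdge_or_dirEdge_of_adj {a b : List ℕ} {x y : ℕ} (h : (meander a b).Adj x y) :
    dirEdge a b x y ∨ dirEdge a b y x := by
  have hne : x ≠ y := h.ne
  rcases h with h | h <;> rcases hne.lt_or_gt with hlt | hlt
  · exact Or.inr (Or.inl ⟨blockPair_symm h, hlt⟩)
  · exact Or.inl (Or.inl ⟨h, hlt⟩)
  · exact Or.inl (Or.inr ⟨h, hlt⟩)
  · exact Or.inr (Or.inr ⟨blockPair_symm h, hlt⟩)

def IsPotential (a b : List ℕ) (φ : ℕ → ℤ) : Prop :=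
  ∀ x y, dirEdge a b x y → φ y = φ x + 1

lemma IsPotential.walkWeight_eq {a b : List ℕ} {φ : ℕ → ℤ} (hφ : IsPotential a b φ)
    {i j : ℕ} (w : (meander a b).Walk i j) : walkWeight a b w = φ j - φ i := by
  classical
  induction w with
  | nil => simp [walkWeight]
  | @cons u v j hadj p ih =>
    have hstep : (if dirEdge a b u v then (1 : ℤ) else -1) = φ v - φ u := by
      split_ifs with hd
      · rw [hφ _ _ hd]; ring
      · rcases dirEdge_or_dirEdge_of_adj hadj with h | h
        · exact absurd h hd
        · rw [hφ _ _ h]; ring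
    simp only [walkWeight, SimpleGraph.Walk.darts_cons, List.map_cons, List.sum_cons] at ih ⊢
    rw [ih, hstep]
    ring

lemma IsPotential.pathWeight_eq {a b : List ℕ} {φ : ℕ → ℤ} (hφ : IsPotential a b φ)
    {i j : ℕ} (hr : (meander a b).Reachable i j) : pathWeight a b i j = φ j - φ i := by
  obtain ⟨w⟩ := hr
  rw [pathWeight, dif_pos ⟨w.bypass, w.bypass_isPath⟩]
  exact hφ.walkWeight_eq _

theorem _root_.SimpleGraph.Reachable.lift {V W : Type*} {G : SimpleGraph V} {H : SimpleGraph W}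
    (f : V → W) (hf : ∀ x y, G.Adj x y → H.Reachable (f x) (f y)) {u v : V}
    (h : G.Reachable u v) : H.Reachable (f u) (f v) := by
  rw [SimpleGraph.reachable_iff_reflTransGen] at h ⊢
  exact h.lift' f fun x y hxy => (SimpleGraph.reachable_iff_reflTransGen _ _).1 (hf x y hxy)

theorem coprime_induction {P : ℕ → ℕ → Prop} (one : P 1 1) (swap : ∀ {A B}, P B A → P A B)
    (add : ∀ {C B}, 0 < C → 0 < B → P C B → P (C + B) B) :
    ∀ {A B : ℕ}, 0 < A → 0 < B → A.Coprime B → P A B := by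
  intro A B
  induction h : A + B using Nat.strong_induction_on generalizing A B with
  | _ n ih =>
    intro hA hB hAB
    rcases lt_trichotomy A B with hlt | rfl | hgt
    · obtain ⟨C, rfl⟩ : ∃ C, B = C + A := ⟨B - A, by omega⟩
      exact swap (add (by omega) hA
        (ih _ (by omega) rfl (by omega) hA (Nat.coprime_add_self_left.1 hAB.symm)))
    · rw [(Nat.coprime_self _).1 hAB]
      exact one
    · obtain ⟨C, rfl⟩ : ∃ C, A = C + B := ⟨A - B, by omega⟩
      exact add (by omega) hB
        (ih _ (by omega) rfl (by omega) hB (Nat.coprime_add_self_left.1 hAB))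

section Maximal

variable {A B C : ℕ}

lemma IsPotential.reflect {φ : ℕ → ℤ} (h : IsPotential [B, A] [B + A] φ) :
    IsPotential [A, B] [A + B] fun i => -φ (A + B + 1 - i) := by
  intro x y hxy
  rw [dirEdge_maximal_iff] at hxy
  have := h (A + B + 1 - y) (A + B + 1 - x) ((dirEdge_maximal_iff B A _ _).2 (by omega))
  linarith

def extendPotential (C B : ℕ) (φ : ℕ → ℤ) (i : ℕ) : ℤ :=
  if i ≤ C + B then φ (C + B + 1 - i) - 1 else φ (i - B)

lemma IsPotential.extend {φ : ℕ → ℤ} (h : IsPotential [C, B] [C + B] φ) :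
    IsPotential [C + B, B] [C + B + B] (extendPotential C B φ) := by
  have h' := fun x y hxy => h x y ((dirEdge_maximal_iff C B x y).2 hxy)
  intro x y hxy
  rw [dirEdge_maximal_iff] at hxy
  unfold extendPotential
  rcases hxy with ⟨hx, hy, hs, hlt⟩ | ⟨hx, hy, hs, hlt⟩ | ⟨hx, hy, hs, hlt⟩
  · rw [if_pos (by omega), if_pos (by omega)]
    linarith [h' (C + B + 1 - x) (C + B + 1 - y) (by omega)]
  · rw [if_neg (by omega), if_neg (by omega)]
    linarith [h' (x - B) (y - B) (by omega)]
  · by_cases hxB : x ≤ B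
    · rw [if_neg (by omega), if_pos (by omega), show y - B = C + B + 1 - x by omega]
      ring
    · rw [if_pos (by omega), if_pos (by omega)]
      linarith [h' (C + B + 1 - x) (C + B + 1 - y) (by omega)]

lemma exists_isPotential_of_coprime (hA : 0 < A) (hB : 0 < B) (hAB : A.Coprime B) :
    ∃ φ, IsPotential [A, B] [A + B] φ := by
  refine coprime_induction (P := fun A B => ∃ φ, IsPotential [A, B] [A + B] φ)
    ⟨fun x => x, fun x y hxy => ?_⟩ (fun ⟨_, h⟩ => ⟨_, h.reflect⟩)
    (fun _ _ ⟨_, h⟩ => ⟨_, h.extend⟩) hA hB hAB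
  rw [dirEdge_maximal_iff] at hxy
  change (y : ℤ) = x + 1
  omega

def IsMeanderConnected (a b : List ℕ) : Prop :=
  ∀ i ∈ Finset.Icc 1 a.sum, ∀ j ∈ Finset.Icc 1 a.sum, (meander a b).Reachable i j

lemma isMeanderConnected_maximal_iff :
    IsMeanderConnected [A, B] [A + B] ↔ ∀ i, 1 ≤ i → i ≤ A + B → ∀ j, 1 ≤ j → j ≤ A + B →
      (meander [A, B] [A + B]).Reachable i j := by
  simp [IsMeanderConnected]

lemma IsMeanderConnected.reflect (h : IsMeanderConnected [B, A] [B + A]) :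
    IsMeanderConnected [A, B] [A + B] := by
  have hf (x y : ℕ) (hxy : (meander [B, A] [B + A]).Adj x y) :
      (meander [A, B] [A + B]).Reachable (A + B + 1 - x) (A + B + 1 - y) := by
    rw [meander_adj_maximal_iff] at hxy
    exact ((meander_adj_maximal_iff A B _ _).2 (by omega)).reachable
  rw [isMeanderConnected_maximal_iff] at h ⊢
  intro i hi hi' j hj hj'
  have := (h (A + B + 1 - i) (by omega) (by omega) (A + B + 1 - j) (by omega)
    (by omega)).lift _ hf
  rwa [Nat.sub_sub_self (by omega), Nat.sub_sub_self (by omega)] at this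

/-- Under `x ↦ C + B + 1 - x`, an arc of the second top block of `M(C|B)` becomes the path
`u — C+2B+1-u — C+B+u — B+1-u` of `M(C+B|B)` (bottom, top, bottom); every other edge of `M(C|B)`
becomes an edge of `M(C+B|B)`. -/
lemma reachable_extend_of_adj {x y : ℕ} (hxy : (meander [C, B] [C + B]).Adj x y) :
    (meander [C + B, B] [C + B + B]).Reachable (C + B + 1 - x) (C + B + 1 - y) := by
  have adj {u v : ℕ} (h : _) := ((meander_adj_maximal_iff (C + B) B u v).2 h).reachable
  rw [meander_adj_maximal_iff] at hxy
  rcases hxy with hxy | hxy | hxy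
  · exact adj (by omega)
  · set u := C + B + 1 - x
    have middle : (meander [C + B, B] [C + B + B]).Reachable (C + 2 * B + 1 - u) (C + B + u) := by
      by_cases hfix : C + 2 * B + 1 - u = C + B + u
      · rw [hfix]
      · exact adj (by omega)
    exact ((adj (by omega)).trans middle).trans (adj (by omega))
  · exact adj (by omega)

lemma IsMeanderConnected.extend (h : IsMeanderConnected [C, B] [C + B]) :
    IsMeanderConnected [C + B, B] [C + B + B] := by
  rw [isMeanderConnected_maximal_iff] at h ⊢
  have first_block (i j : ℕ) (hi : 1 ≤ i) (hi' : i ≤ C + B) (hj : 1 ≤ j) (hj' : j ≤ C + B) :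
      (meander [C + B, B] [C + B + B]).Reachable i j := by
    have := (h (C + B + 1 - i) (by omega) (by omega) (C + B + 1 - j) (by omega)
      (by omega)).lift _ fun _ _ => reachable_extend_of_adj
    rwa [Nat.sub_sub_self (by omega), Nat.sub_sub_self (by omega)] at this
  have to_first_block (i : ℕ) (hi : 1 ≤ i) (hi' : i ≤ C + B + B) :
      ∃ i', 1 ≤ i' ∧ i' ≤ C + B ∧ (meander [C + B, B] [C + B + B]).Reachable i i' := by
    by_cases hiC : i ≤ C + B
    · exact ⟨i, hi, hiC, .refl _⟩
    · exact ⟨C + B + B + 1 - i, by omega, by omega,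
        ((meander_adj_maximal_iff _ _ _ _).2 (by omega)).reachable⟩
  intro i hi hi' j hj hj'
  obtain ⟨i', hi'1, hi'2, hii'⟩ := to_first_block i hi hi'
  obtain ⟨j', hj'1, hj'2, hjj'⟩ := to_first_block j hj hj'
  exact (hii'.trans (first_block i' j' hi'1 hi'2 hj'1 hj'2)).trans hjj'.symm

lemma isMeanderConnected_of_coprime (hA : 0 < A) (hB : 0 < B) (hAB : A.Coprime B) :
    IsMeanderConnected [A, B] [A + B] := by
  refine coprime_induction (P := fun A B => IsMeanderConnected [A, B] [A + B]) ?_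
    IsMeanderConnected.reflect (fun _ _ => IsMeanderConnected.extend) hA hB hAB
  rw [isMeanderConnected_maximal_iff]
  intro i hi hi' j hj hj'
  have h12 : (meander [1, 1] [1 + 1]).Reachable 1 2 :=
    ((meander_adj_maximal_iff 1 1 1 2).2 (by omega)).reachable
  interval_cases i <;> interval_cases j
  exacts [.refl _, h12, h12.symm, .refl _]

lemma pathWeight_extend (hC : 0 < C) (hB : 0 < B) (hCB : C.Coprime B) {i j : ℕ}
    (hi : 1 ≤ i) (hi' : i ≤ C + B) (hj : 1 ≤ j) (hj' : j ≤ C + B) :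
    pathWeight [C + B, B] [C + B + B] i j
      = pathWeight [C, B] [C + B] (C + B + 1 - i) (C + B + 1 - j) := by
  obtain ⟨φ, hφ⟩ := exists_isPotential_of_coprime hC hB hCB
  have big := isMeanderConnected_maximal_iff.1
    (isMeanderConnected_of_coprime (by omega) hB (Nat.coprime_add_self_left.2 hCB))
  have small := isMeanderConnected_maximal_iff.1 (isMeanderConnected_of_coprime hC hB hCB)
  rw [hφ.extend.pathWeight_eq (big i hi (by omega) j hj (by omega)),
    hφ.pathWeight_eq (small _ (by omega) (by omega) _ (by omega) (by omega)),
    extendPotential, extendPotential, if_pos hi', if_pos hj']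
  ring

end Maximal

lemma sameBlock_cons {c : ℕ} {a : List ℕ} {i j : ℕ} (hi : 1 ≤ i) (hi' : i ≤ c) (hj : 1 ≤ j)
    (hj' : j ≤ c) : sameBlock (c :: a) i j :=
  ⟨0, by simp, by simpa, by simpa, by simpa, by simpa⟩

lemma seaweedPos_cons_cons {c d : ℕ} {a b : List ℕ} (hcd : c ≤ d) {i j : ℕ} (hi : 1 ≤ i)
    (hi' : i ≤ c) (hj : 1 ≤ j) (hj' : j ≤ c) : seaweedPos (c :: a) (d :: b) i j := by
  rcases le_total j i with h | h
  · exact .inl ⟨h, sameBlock_cons hi hi' hj hj'⟩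
  · exact .inr ⟨h, sameBlock_cons hi (by omega) hj (by omega)⟩

lemma spectrumBlock_cons_cons_Icc {c d : ℕ} (a b : List ℕ) (hcd : c ≤ d) :
    spectrumBlock (c :: a) (d :: b) (Finset.Icc 1 c) (Finset.Icc 1 c)
      = (Finset.Icc 1 c ×ˢ Finset.Icc 1 c).val.map
          fun p => pathWeight (c :: a) (d :: b) p.1 p.2 := by
  classical
  rw [spectrumBlock, Finset.filter_true_of_mem]
  intro p hp
  simp only [Finset.mem_product, Finset.mem_Icc] at hp
  exact seaweedPos_cons_cons hcd hp.1.1 hp.1.2 hp.2.1 hp.2.2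

lemma map_Icc_product_reflect {β : Type*} (n : ℕ) (f : ℕ × ℕ → β) :
    (Finset.Icc 1 n ×ˢ Finset.Icc 1 n).val.map (fun p => f (n + 1 - p.1, n + 1 - p.2))
      = (Finset.Icc 1 n ×ˢ Finset.Icc 1 n).val.map f := by
  refine Multiset.map_eq_map_of_bij_of_nodup _ _ (Finset.nodup _) (Finset.nodup _)
    (fun p _ => (n + 1 - p.1, n + 1 - p.2)) ?_ ?_ ?_ fun _ _ => rfl
  · simp only [Finset.mem_val, Finset.mem_product, Finset.mem_Icc]
    omega
  · simp only [Finset.mem_val, Finset.mem_product, Finset.mem_Icc, Prod.ext_iff]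
    omega
  · simp only [Finset.mem_val, Finset.mem_product, Finset.mem_Icc, Prod.ext_iff]
    intro q hq
    exact ⟨(n + 1 - q.1, n + 1 - q.2), by omega, by omega⟩

theorem spectrumBlock_eq_extendedValues {C B : ℕ} (hC : 0 < C) (hB : 0 < B) (hCB : C.Coprime B) :
    spectrumBlock [C + B, B] [C + B + B] (Finset.Icc 1 (C + B)) (Finset.Icc 1 (C + B))
      = extendedValues [C, B] [C + B] := by
  rw [spectrumBlock_cons_cons_Icc _ _ (by omega), extendedValues]
  simp only [List.sum_cons, List.sum_nil, add_zero]
  rw [← map_Icc_product_reflect (C + B) fun p => pathWeight [C, B] [C + B] p.1 p.2]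
  refine Multiset.map_congr rfl fun p hp => ?_
  simp only [Finset.mem_val, Finset.mem_product, Finset.mem_Icc] at hp
  exact pathWeight_extend hC hB hCB hp.1.1 hp.1.2 hp.2.1 hp.2.2

/-- For coprime positive `k1, k2` and `m ≥ 1`, the top-left block (rows and columns
`1, …, m k1 + k2`) of the spectrum matrix of `p^A(m k1 + k2 | k1 / (m+1) k1 + k2)`
consists of the same multiset of values as the extended spectrum matrix of
`p^A((m-1) k1 + k2 | k1 / m k1 + k2)`. -/
theorem statement3 (k1 k2 m : ℕ) (hk1 : 0 < k1) (hk2 : 0 < k2) (hm : 0 < m)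
    (hgcd : Nat.gcd k1 k2 = 1) :
    spectrumBlock [m * k1 + k2, k1] [(m + 1) * k1 + k2]
        (Finset.Icc 1 (m * k1 + k2)) (Finset.Icc 1 (m * k1 + k2))
      = extendedValues [(m - 1) * k1 + k2, k1] [m * k1 + k2] := by
  obtain ⟨m, rfl⟩ := Nat.exists_eq_add_one_of_ne_zero hm.ne'
  have hcop : (m * k1 + k2).Coprime k1 := by
    rw [add_comm, Nat.coprime_add_mul_right_left]
    exact Nat.Coprime.symm hgcd
  rw [Nat.add_sub_cancel, show (m + 1 + 1) * k1 + k2 = m * k1 + k2 + k1 + k1 by ring,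
    show (m + 1) * k1 + k2 = m * k1 + k2 + k1 by ring]
  exact spectrumBlock_eq_extendedValues (by positivity) hk1 hcop

end Seaweed
end

section
/- For every integer k ≥ 1, the Frobenius type-A seaweed g = p^A(k|1 / k+1) has the log-concave spectrum property: listing the distinct values of its spectrum in increasing order, the corresponding sequence of multiplicities m_0,…,m_N satisfies m_i^2 ≥ m_{i−1} m_{i+1} for all 0 < i < N. -/
namespace Seaweed

/-!
The meander of `(k, 1 | k + 1)` is the path `v_{k+1}, v_1, v_k, v_2, v_{k-1}, …`, alternating
bottom and top edges, and each of its edges is oriented towards `v_{k+1}`. So the weight of any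
walk from `v_i` to `v_j` is `p - q`, where `p` and `q` are the positions of `v_i` and `v_j` along
the path. In these coordinates the seaweed consists of the pairs `(p, q) ∈ [0, k]²` except those
with `p = 0 ≠ q` (the row of `v_{k+1}` lies in a block of size one of `a`); once the diagonal
entry `(0, 0)` is removed, the spectrum is the multiset of differences of `[1, k] × [0, k]`. Its
multiplicities `1, 2, …, k, k, …, 2, 1` form a concave sequence, hence a log-concave one by AM-GM.
-/

open Finset
open scoped Pointwise

lemma count_map_sub_Icc_prod (a b c d w : ℤ) :
    ((Icc a b ×ˢ Icc c d).val.map fun x => x.1 - x.2).count w =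
      (min b (w + d) + 1 - max a (w + c)).toNat := by
  have hshift : w +ᵥ Icc c d = Icc (w + c) (w + d) := by rw [← image_add_left_Icc]; rfl
  have hinter : Icc a b ∩ Icc (w + c) (w + d) = Icc (max a (w + c)) (min b (w + d)) := by
    ext; simp only [mem_inter, mem_Icc]; omega
  rw [Multiset.count_map]
  simp_rw [eq_comm (a := w)]
  rw [← filter_val, ← card_def, card_sub_eq, ← card_inter_vadd, hshift, hinter, Int.card_Icc]

lemma toFinset_map_sub_Icc_prod {a b c d : ℤ} (hab : a ≤ b) (hcd : c ≤ d) :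
    ((Icc a b ×ˢ Icc c d).val.map fun x => x.1 - x.2).toFinset = Icc (a - d) (b - c) := by
  ext w
  rw [Multiset.mem_toFinset, ← Multiset.count_pos, count_map_sub_Icc_prod, mem_Icc]
  omega

lemma sort_Icc (a b : ℤ) :
    (Icc a b).sort (· ≤ ·) = (List.range (b + 1 - a).toNat).map fun i : ℕ => a + i := by
  have hnd : ((List.range (b + 1 - a).toNat).map fun i : ℕ => a + i).Nodup :=
    List.nodup_range.map fun i j h => by simpa using h
  rw [← (List.toFinset_sort (· ≤ ·) hnd).2]
  · congr 1
    ext x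
    simp only [mem_Icc, List.mem_toFinset, List.mem_map, List.mem_range]
    constructor
    · rintro ⟨h1, h2⟩
      exact ⟨(x - a).toNat, by omega, by omega⟩
    · rintro ⟨i, hi, rfl⟩
      omega
  · rw [List.pairwise_map]
    exact List.pairwise_lt_range.imp fun h => by omega

lemma hasLogConcaveSpectrum_of_toFinset_eq_Icc {S : Multiset ℤ} {a b : ℤ}
    (hS : S.toFinset = Icc a b)
    (h : ∀ w, a < w → w < b → S.count (w - 1) * S.count (w + 1) ≤ S.count w ^ 2) :
    HasLogConcaveSpectrum S := by
  intro i hi hlen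
  rw [hS, sort_Icc, List.length_map, List.length_range] at hlen
  rw [hS, sort_Icc]
  simp only [List.getD_eq_getElem?_getD, List.getElem?_map, List.getElem?_range, hlen,
    (by omega : i < (b + 1 - a).toNat), (by omega : i - 1 < (b + 1 - a).toNat),
    Option.map_some, Option.getD_some]
  have := h (a + i) (by omega) (by omega)
  rwa [show a + i - 1 = a + ↑(i - 1) by omega, show a + i + 1 = a + ↑(i + 1) by omega] at this

lemma mul_le_sq_of_add_le_two_mul {x y z : ℕ} (h : x + y ≤ 2 * z) : x * y ≤ z ^ 2 := by
  nlinarith [four_mul_le_sq_add x y]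

lemma blockPair_singleton (n i j : ℕ) :
    blockPair [n] i j ↔ 1 ≤ i ∧ 1 ≤ j ∧ i + j = n + 1 ∧ i ≠ j := by
  constructor
  · rintro ⟨m, hm, hi, hj, hsum, hne⟩
    obtain rfl : m = 0 := by simpa using hm
    simp_all only [List.take_zero, List.sum_nil, List.getD_cons_zero]
    omega
  · rintro ⟨hi, hj, hsum, hne⟩
    exact ⟨0, by simp, by simpa, by simpa, by simpa using hsum, hne⟩

lemma blockPair_pair_one (n i j : ℕ) : blockPair [n, 1] i j ↔ blockPair [n] i j := by
  constructor
  · rintro ⟨m, hm, hi, hj, hsum, hne⟩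
    simp only [List.length_cons, List.length_nil] at hm
    interval_cases m
    · exact ⟨0, by simp, hi, hj, by simpa using hsum, hne⟩
    · simp only [List.take_one, List.head?_cons, Option.toList_some, List.sum_singleton,
        List.getD_cons_succ, List.getD_cons_zero] at hi hj hsum
      omega
  · rintro ⟨m, hm, hi, hj, hsum, hne⟩
    obtain rfl : m = 0 := by simpa using hm
    exact ⟨0, by simp, hi, hj, by simpa using hsum, hne⟩

lemma sameBlock_singleton (n i j : ℕ) :
    sameBlock [n] i j ↔ 1 ≤ i ∧ i ≤ n ∧ 1 ≤ j ∧ j ≤ n := by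
  constructor
  · rintro ⟨m, hm, h⟩
    obtain rfl : m = 0 := by simpa using hm
    simp only [List.take_zero, List.sum_nil, List.getD_cons_zero] at h
    omega
  · intro h
    exact ⟨0, by simp, by simp only [List.take_zero, List.sum_nil, List.getD_cons_zero]; omega⟩

lemma sameBlock_pair (m n i j : ℕ) :
    sameBlock [m, n] i j ↔
      (1 ≤ i ∧ i ≤ m ∧ 1 ≤ j ∧ j ≤ m) ∨ (m < i ∧ i ≤ m + n ∧ m < j ∧ j ≤ m + n) := by
  constructor
  · rintro ⟨l, hl, h⟩
    simp only [List.length_cons, List.length_nil] at hl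
    interval_cases l
    · simp only [List.take_zero, List.sum_nil, List.getD_cons_zero] at h
      omega
    · simp only [List.take_one, List.head?_cons, Option.toList_some, List.sum_singleton,
        List.getD_cons_succ, List.getD_cons_zero] at h
      omega
  · rintro (h | h)
    · exact ⟨0, by simp, by simp only [List.take_zero, List.sum_nil, List.getD_cons_zero]; omega⟩
    · refine ⟨1, by simp, ?_⟩
      simp only [List.take_one, List.head?_cons, Option.toList_some, List.sum_singleton,
        List.getD_cons_succ, List.getD_cons_zero]
      omega

section PathCoordinates

variable (k : ℕ)

lemma meander_adj_iff (i j : ℕ) :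
    (meander [k, 1] [k + 1]).Adj i j ↔
      1 ≤ i ∧ 1 ≤ j ∧ i ≠ j ∧ (i + j = k + 1 ∨ i + j = k + 2) := by
  change blockPair _ i j ∨ blockPair _ i j ↔ _
  rw [blockPair_pair_one, blockPair_singleton, blockPair_singleton]
  omega

/-- The position of `v` along the path `v_{k+1}, v_1, v_k, v_2, v_{k-1}, …`. -/
def pathIndex (v : ℕ) : ℤ := if 2 * v ≤ k + 1 then 2 * v - 1 else 2 * (k + 1 - v)

def pathVertex (p : ℤ) : ℕ := if p % 2 = 1 then ((p + 1) / 2).toNat else (k + 1 - p / 2).toNat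

variable {k}

lemma pathIndex_mem_Icc {v : ℕ} (hv : v ∈ Icc 1 (k + 1)) :
    pathIndex k v ∈ Icc 0 (k : ℤ) := by
  simp only [mem_Icc] at hv ⊢; unfold pathIndex; split_ifs <;> omega

lemma pathIndex_eq_zero_iff {v : ℕ} (hv : v ∈ Icc 1 (k + 1)) :
    pathIndex k v = 0 ↔ v = k + 1 := by
  simp only [mem_Icc] at hv; unfold pathIndex; split_ifs <;> omega

lemma pathVertex_pathIndex {v : ℕ} (hv : v ∈ Icc 1 (k + 1)) :
    pathVertex k (pathIndex k v) = v := by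
  simp only [mem_Icc] at hv; unfold pathIndex pathVertex; split_ifs <;> omega

lemma pathVertex_mem_Icc {p : ℤ} (hp : p ∈ Icc 0 (k : ℤ)) :
    pathVertex k p ∈ Icc 1 (k + 1) := by
  simp only [mem_Icc] at hp ⊢; unfold pathVertex; split_ifs <;> omega

lemma pathIndex_pathVertex {p : ℤ} (hp : p ∈ Icc 0 (k : ℤ)) :
    pathIndex k (pathVertex k p) = p := by
  simp only [mem_Icc] at hp; unfold pathIndex pathVertex; split_ifs <;> omega

lemma meander_adj_pathVertex_succ {p : ℤ} (hp : 0 ≤ p) (hpk : p < k) :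
    (meander [k, 1] [k + 1]).Adj (pathVertex k p) (pathVertex k (p + 1)) := by
  rw [meander_adj_iff]; unfold pathVertex; split_ifs <;> omega

lemma meander_reachable_pathVertex (n : ℕ) (hn : n ≤ k) :
    (meander [k, 1] [k + 1]).Reachable (k + 1) (pathVertex k n) := by
  induction n with
  | zero => simp [pathVertex]
  | succ n ih =>
    push_cast
    exact (ih (by omega)).trans (meander_adj_pathVertex_succ (by omega) (by omega)).reachable

lemma meander_reachable {i j : ℕ} (hi : i ∈ Icc 1 (k + 1)) (hj : j ∈ Icc 1 (k + 1)) :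
    (meander [k, 1] [k + 1]).Reachable i j := by
  have reach {v : ℕ} (hv : v ∈ Icc 1 (k + 1)) : (meander [k, 1] [k + 1]).Reachable (k + 1) v := by
    have hpos := pathIndex_mem_Icc hv
    rw [mem_Icc] at hpos
    obtain ⟨n, hn⟩ := Int.eq_ofNat_of_zero_le hpos.1
    have := meander_reachable_pathVertex (k := k) n (by omega)
    rwa [← hn, pathVertex_pathIndex hv] at this
  exact (reach hi).symm.trans (reach hj)

open scoped Classical in
lemma edgeSign_eq {x y : ℕ} (h : (meander [k, 1] [k + 1]).Adj x y) :
    (if dirEdge [k, 1] [k + 1] x y then (1 : ℤ) else -1) = pathIndex k x - pathIndex k y := by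
  rw [meander_adj_iff] at h
  simp only [dirEdge, blockPair_pair_one, blockPair_singleton, pathIndex]
  split_ifs <;> omega

lemma walkWeight_eq {i j : ℕ} (w : (meander [k, 1] [k + 1]).Walk i j) :
    walkWeight [k, 1] [k + 1] w = pathIndex k i - pathIndex k j := by
  induction w with
  | nil => simp [walkWeight]
  | cons h p ih =>
    unfold walkWeight at ih ⊢
    rw [SimpleGraph.Walk.darts_cons, List.map_cons, List.sum_cons, ih, edgeSign_eq h]
    ring

lemma pathWeight_eq {i j : ℕ} (hi : i ∈ Icc 1 (k + 1)) (hj : j ∈ Icc 1 (k + 1)) :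
    pathWeight [k, 1] [k + 1] i j = pathIndex k i - pathIndex k j := by
  obtain ⟨w⟩ := meander_reachable hi hj
  have hpath : ∃ p : (meander [k, 1] [k + 1]).Walk i j, p.IsPath := ⟨w.toPath.1, w.toPath.2⟩
  rw [pathWeight, dif_pos hpath, walkWeight_eq]

lemma seaweedPos_iff {i j : ℕ} (hi : i ∈ Icc 1 (k + 1)) (hj : j ∈ Icc 1 (k + 1)) :
    seaweedPos [k, 1] [k + 1] i j ↔ (i = k + 1 → j = k + 1) := by
  simp only [mem_Icc] at hi hj
  rw [seaweedPos, sameBlock_pair, sameBlock_singleton]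
  omega

lemma injOn_pathIndex : Set.InjOn (pathIndex k) (Icc 1 (k + 1) : Finset ℕ) :=
  fun v hv w hw h => by rw [← pathVertex_pathIndex hv, h, pathVertex_pathIndex hw]

open scoped Classical in
lemma image_pathIndex_seaweedPos :
    ((Icc 1 (k + 1) ×ˢ Icc 1 (k + 1)).filter fun x => seaweedPos [k, 1] [k + 1] x.1 x.2).image
        (fun x => (pathIndex k x.1, pathIndex k x.2)) =
      insert (0, 0) (Icc (1 : ℤ) k ×ˢ Icc (0 : ℤ) k) := by
  have hcorner {p q : ℤ} : (p, q) ∈ insert (0, 0) (Icc (1 : ℤ) k ×ˢ Icc (0 : ℤ) k) ↔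
      p ∈ Icc (0 : ℤ) k ∧ q ∈ Icc (0 : ℤ) k ∧ (p = 0 → q = 0) := by
    simp only [mem_insert, mem_product, mem_Icc, Prod.mk.injEq]
    omega
  ext ⟨p, q⟩
  rw [hcorner, mem_image]
  constructor
  · rintro ⟨⟨i, j⟩, hij, hpq⟩
    obtain ⟨hij, hsw⟩ := mem_filter.1 hij
    obtain ⟨hi, hj⟩ := mem_product.1 hij
    obtain ⟨rfl, rfl⟩ := Prod.mk.inj hpq
    refine ⟨pathIndex_mem_Icc hi, pathIndex_mem_Icc hj, fun h => ?_⟩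
    rw [pathIndex_eq_zero_iff hi] at h
    rw [pathIndex_eq_zero_iff hj]
    exact (seaweedPos_iff hi hj).1 hsw h
  · rintro ⟨hp, hq, hpq⟩
    have hi := pathVertex_mem_Icc hp
    have hj := pathVertex_mem_Icc hq
    refine ⟨(pathVertex k p, pathVertex k q), mem_filter.2 ⟨mem_product.2 ⟨hi, hj⟩, ?_⟩, ?_⟩
    · rw [seaweedPos_iff hi hj, ← pathIndex_eq_zero_iff hi, ← pathIndex_eq_zero_iff hj,
        pathIndex_pathVertex hp, pathIndex_pathVertex hq]
      exact hpq
    · rw [pathIndex_pathVertex hp, pathIndex_pathVertex hq]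

open scoped Classical in
lemma spectrumBlock_eq :
    spectrumBlock [k, 1] [k + 1] (Icc 1 (k + 1)) (Icc 1 (k + 1)) =
      (insert (0, 0) (Icc (1 : ℤ) k ×ˢ Icc (0 : ℤ) k)).val.map fun x => x.1 - x.2 := by
  have hinj := (injOn_pathIndex (k := k)).prodMap (injOn_pathIndex (k := k))
  rw [← image_pathIndex_seaweedPos, image_val_of_injOn (hinj.mono fun x hx => ?_),
    Multiset.map_map, spectrumBlock]
  · refine Multiset.map_congr rfl fun x hx => ?_
    obtain ⟨hx1, hx2⟩ := mem_product.1 (mem_filter.1 hx).1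
    exact pathWeight_eq hx1 hx2
  · exact mem_product.1 (mem_filter.1 hx).1

lemma spectrum_eq :
    spectrum [k, 1] [k + 1] = (Icc (1 : ℤ) k ×ˢ Icc (0 : ℤ) k).val.map fun x => x.1 - x.2 := by
  have hsum : ([k, 1] : List ℕ).sum = k + 1 := by simp
  rw [spectrum, hsum, spectrumBlock_eq, insert_val_of_notMem (by simp), Multiset.map_cons,
    sub_zero, Multiset.sub_singleton, Multiset.erase_cons_head]

end PathCoordinates

/-- For `k ≥ 1`, the Frobenius type-A seaweed `p^A(k|1 / k+1)` has the log-concave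
spectrum property. -/
theorem statement8 (k : ℕ) (hk : 1 ≤ k) :
    HasLogConcaveSpectrum (spectrum [k, 1] [k + 1]) := by
  rw [spectrum_eq]
  refine hasLogConcaveSpectrum_of_toFinset_eq_Icc
    (toFinset_map_sub_Icc_prod (by omega) (by omega)) fun w _ _ => ?_
  apply mul_le_sq_of_add_le_two_mul
  simp only [count_map_sub_Icc_prod]
  omega

end Seaweed
end
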